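/- There exist constants c and d such that for every ε, every n ≥ 2, and all strings x, y, z, p, q of length at most n: if C(p | [x,y,z]) < ε, C(q | [x,y,z]) < ε, C(y | [p,x]) < ε and C(z | [q,y]) < ε (i.e., (p,q) is an ε information transmission in the network with one source holding (x,y,z), channel p to a node holding x that needs y, and channel q to a node holding y that needs z), then C([p,q]) ≥ max{ C([y,z] | x), C(z|y) } − c·ε − d·log n. -/

import Mathlib

/-
Proof idea: from `[p,q]` (a program of length `C([p,q])`), `x` and the short programs for `y`
given `[p,x]` and for `z` given `[q,y]`, one decoder computes `[y,z]`; another computes `z`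
from `y`. Passing the extra programs inside the self-delimiting pair encoding costs `O(ε)`, so
`C([y,z] | x)` and `C(z | y)` are at most `C([p,q]) + O(ε) + O(1)`. Since `C(z | [q,y]) < ε`
forces `ε ≥ 1`, the additive constant is absorbed into `c ε`, and `d = 0` suffices.
-/

/-- Binary strings. -/
abbrev Str : Type := List Bool

/-- Pair encoding `[x,y] = 0^{|x|} 1 x y`. -/
def spair (x y : Str) : Str :=
  List.replicate x.length false ++ [true] ++ x ++ y

/-- `U` is an optimal programming language: it is partial computable and every
partial computable programming language `F` is simulated by `U` via a prefix `t_F`. -/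
def IsOptimal (U : Str × Str →. Str) : Prop :=
  Partrec U ∧
    ∀ F : Str × Str →. Str, Partrec F → ∃ t : Str, ∀ p x : Str, F (p, x) = U (t ++ p, x)

/-- Conditional Kolmogorov complexity `C(x|y)` with respect to `U`. -/
noncomputable def KC (U : Str × Str →. Str) (x y : Str) : ℕ :=
  sInf {n : ℕ | ∃ p : Str, p.length = n ∧ U (p, y) = Part.some x}

/-- Plain Kolmogorov complexity `C(x) = C(x|Λ)`. -/
noncomputable def K (U : Str × Str →. Str) (x : Str) : ℕ := KC U x []

/-- Mutual information `I(x:y) = C(y) − C(y|x)` (as an integer). -/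
noncomputable def MI (U : Str × Str →. Str) (x y : Str) : ℤ :=
  (K U y : ℤ) - (KC U y x : ℤ)

/-- Conditional mutual information `I(x:y|z) = C(y|z) − C(y|[x,z])` (as an integer). -/
noncomputable def MIc (U : Str × Str →. Str) (x y z : Str) : ℤ :=
  (KC U y z : ℤ) - (KC U y (spair x z) : ℤ)

theorem Primrec.list_replicate {α : Type*} [Primcodable α] (a : α) :
    Primrec fun n : ℕ => List.replicate n a :=
  (Primrec.list_map Primrec.list_range (Primrec.const a).to₂).of_eq fun n => by
    simp [List.map_const']

theorem primrec₂_spair : Primrec₂ spair :=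
  Primrec.list_append.comp
    (Primrec.list_append.comp
      (Primrec.list_append.comp
        ((Primrec.list_replicate false).comp (Primrec.list_length.comp .fst))
        (Primrec.const [true])) .fst) .snd

theorem length_spair (x y : Str) : (spair x y).length = 2 * x.length + 1 + y.length := by
  simp only [spair, List.length_append, List.length_replicate, List.length_singleton]
  ring

theorem idxOf_true_spair (x y : Str) : (spair x y).idxOf true = x.length := by
  rw [spair, List.append_assoc, List.append_assoc, List.idxOf_append_of_notMem (by simp)]
  simp

theorem drop_spair (x y : Str) : (spair x y).drop (x.length + 1) = x ++ y := by
  rw [spair, List.append_assoc _ x y]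
  exact List.drop_left' (by simp)

def spairFst (w : Str) : Str := (w.drop (w.idxOf true + 1)).take (w.idxOf true)

def spairSnd (w : Str) : Str := (w.drop (w.idxOf true + 1)).drop (w.idxOf true)

@[simp] theorem spairFst_spair (x y : Str) : spairFst (spair x y) = x := by
  rw [spairFst, idxOf_true_spair, drop_spair, List.take_left]

@[simp] theorem spairSnd_spair (x y : Str) : spairSnd (spair x y) = y := by
  rw [spairSnd, idxOf_true_spair, drop_spair, List.drop_left]

theorem primrec_spairFst : Primrec spairFst :=
  have hi : Primrec fun w : Str => w.idxOf true := Primrec.list_idxOf.comp (.const true) .id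
  Primrec.list_take.comp hi (Primrec.list_drop.comp (Primrec.succ.comp hi) .id)

theorem primrec_spairSnd : Primrec spairSnd :=
  have hi : Primrec fun w : Str => w.idxOf true := Primrec.list_idxOf.comp (.const true) .id
  Primrec.list_drop.comp hi (Primrec.list_drop.comp (Primrec.succ.comp hi) .id)

section Complexity

variable {U : Str × Str →. Str}

theorem exists_length_eq_KC (hU : IsOptimal U) (x y : Str) :
    ∃ p : Str, p.length = KC U x y ∧ U (p, y) = Part.some x := by
  obtain ⟨t, ht⟩ := hU.2 (fun a => Part.some a.1) Computable.fst
  have hne : {n : ℕ | ∃ p : Str, p.length = n ∧ U (p, y) = Part.some x}.Nonempty :=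
    ⟨(t ++ x).length, t ++ x, rfl, (ht x y).symm⟩
  exact Nat.sInf_mem hne

theorem KC_le_of_partrec (hU : IsOptimal U) {F : Str × Str →. Str} (hF : Partrec F) :
    ∃ c : ℕ, ∀ p y x : Str, F (p, y) = Part.some x → KC U x y ≤ p.length + c := by
  obtain ⟨t, ht⟩ := hU.2 F hF
  exact ⟨t.length, fun p y x h =>
    Nat.sInf_le ⟨t ++ p, by rw [List.length_append, Nat.add_comm], ht p y ▸ h⟩⟩

theorem KC_map_le (hU : IsOptimal U) {f g : Str → Str} (hf : Computable f)
    (hg : Computable g) : ∃ c : ℕ, ∀ x y : Str, KC U (g x) y ≤ KC U x (f y) + c := by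
  have hF : Partrec fun a : Str × Str => (U (a.1, f a.2)).map g :=
    (hU.1.comp (Computable.fst.pair (hf.comp Computable.snd))).map (hg.comp Computable.snd).to₂
  obtain ⟨c, hc⟩ := KC_le_of_partrec hU hF
  refine ⟨c, fun x y => ?_⟩
  obtain ⟨p, hp, hUp⟩ := exists_length_eq_KC hU x (f y)
  simpa [hp] using hc p y (g x) (by simp [hUp])

theorem KC_le_KC_comp (hU : IsOptimal U) {f : Str → Str} (hf : Computable f) :
    ∃ c : ℕ, ∀ x y : Str, KC U x y ≤ KC U x (f y) + c :=
  KC_map_le hU hf Computable.id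

theorem KC_le_K_add (hU : IsOptimal U) : ∃ c : ℕ, ∀ x y : Str, KC U x y ≤ K U x + c :=
  KC_map_le hU (Computable.const []) Computable.id

-- The decoder reads `spair s r`, with `s` a program for `z`: only `s` is written twice.
theorem KC_spair_le (hU : IsOptimal U) : ∃ c : ℕ, ∀ x y z : Str,
    KC U (spair y z) x ≤ KC U y x + 2 * KC U z (spair y x) + c := by
  have hF : Partrec fun a : Str × Str => (U (spairSnd a.1, a.2)).bind fun y =>
      (U (spairFst a.1, spair y a.2)).map (spair y) := by
    have hspair := primrec₂_spair.to_comp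
    refine (hU.1.comp ((primrec_spairSnd.to_comp.comp .fst).pair .snd)).bind ?_
    exact (hU.1.comp ((primrec_spairFst.to_comp.comp (Computable.fst.comp .fst)).pair
      (hspair.comp .snd (Computable.snd.comp .fst)))).map
      (hspair.comp (Computable.snd.comp .fst) .snd).to₂
  obtain ⟨c, hc⟩ := KC_le_of_partrec hU hF
  refine ⟨c + 1, fun x y z => ?_⟩
  obtain ⟨r, hr, hUr⟩ := exists_length_eq_KC hU y x
  obtain ⟨s, hs, hUs⟩ := exists_length_eq_KC hU z (spair y x)
  have hdec := hc (spair s r) x (spair y z) (by simp [hUr, hUs])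
  rw [length_spair, hr, hs] at hdec
  omega

theorem KC_le_K_add_KC_spair (hU : IsOptimal U) : ∃ c : ℕ, ∀ w x z : Str,
    KC U z x ≤ K U w + 2 * KC U z (spair w x) + c := by
  obtain ⟨c₁, hproj⟩ := KC_map_le hU Computable.id primrec_spairSnd.to_comp
  obtain ⟨c₂, hpair⟩ := KC_spair_le hU
  obtain ⟨c₃, hK⟩ := KC_le_K_add hU
  refine ⟨c₁ + c₂ + c₃, fun w x z => ?_⟩
  have h₁ := hproj (spair w z) x
  have h₂ := hpair x w z
  have h₃ := hK w x
  simp only [spairSnd_spair, id] at h₁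
  omega

theorem KC_le_K_spair_add_KC (hU : IsOptimal U) : ∃ c : ℕ, ∀ p q y z : Str,
    KC U z y ≤ K U (spair p q) + 2 * KC U z (spair q y) + c := by
  obtain ⟨c₁, hhelp⟩ := KC_le_K_add_KC_spair hU
  obtain ⟨c₂, hcond⟩ := KC_le_KC_comp hU
    (primrec₂_spair.comp (primrec_spairSnd.comp primrec_spairFst) primrec_spairSnd).to_comp
  refine ⟨c₁ + 2 * c₂, fun p q y z => ?_⟩
  have h₁ := hhelp (spair p q) y z
  have h₂ := hcond z (spair (spair p q) y)
  simp only [spairFst_spair, spairSnd_spair] at h₂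
  omega

theorem KC_spair_le_K_spair_add_KC (hU : IsOptimal U) : ∃ c : ℕ, ∀ p q x y z : Str,
    KC U (spair y z) x ≤
      K U (spair p q) + 2 * KC U y (spair p x) + 4 * KC U z (spair q y) + c := by
  obtain ⟨c₁, hhelp⟩ := KC_le_K_add_KC_spair hU
  obtain ⟨c₂, hpair⟩ := KC_spair_le hU
  obtain ⟨c₃, hcond_y⟩ := KC_le_KC_comp hU
    (primrec₂_spair.comp (primrec_spairFst.comp primrec_spairFst) primrec_spairSnd).to_comp
  obtain ⟨c₄, hcond_z⟩ := KC_le_KC_comp hU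
    (primrec₂_spair.comp (primrec_spairSnd.comp (primrec_spairFst.comp primrec_spairSnd))
      primrec_spairFst).to_comp
  refine ⟨c₁ + 2 * c₂ + 2 * c₃ + 4 * c₄, fun p q x y z => ?_⟩
  have h₁ := hhelp (spair p q) x (spair y z)
  have h₂ := hpair (spair (spair p q) x) y z
  have h₃ := hcond_y y (spair (spair p q) x)
  have h₄ := hcond_z z (spair y (spair (spair p q) x))
  simp only [spairFst_spair, spairSnd_spair] at h₃ h₄
  omega

end Complexity

theorem stmt9 (U : Str × Str →. Str) (hU : IsOptimal U) :
    ∃ c d : ℕ, ∀ ε n : ℕ, 2 ≤ n → ∀ x y z p q : Str,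
      x.length ≤ n → y.length ≤ n → z.length ≤ n →
      p.length ≤ n → q.length ≤ n →
      KC U p (spair x (spair y z)) < ε →
      KC U q (spair x (spair y z)) < ε →
      KC U y (spair p x) < ε →
      KC U z (spair q y) < ε →
      (K U (spair p q) : ℤ) ≥
        (max (KC U (spair y z) x) (KC U z y) : ℤ) - c * ε - d * Nat.log 2 n := by
  obtain ⟨cA, hA⟩ := KC_le_K_spair_add_KC hU
  obtain ⟨cB, hB⟩ := KC_spair_le_K_spair_add_KC hU
  refine ⟨cA + cB + 6, 0, fun ε n _ x y z p q _ _ _ _ _ _ _ hy hz => ?_⟩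
  have hε : 1 ≤ ε := Nat.one_le_of_lt hz
  have hmax : max (KC U (spair y z) x) (KC U z y) ≤ K U (spair p q) + (cA + cB + 6) * ε :=
    max_le (by nlinarith [hB p q x y z]) (by nlinarith [hA p q y z])
  push_cast at hmax ⊢
  linarith
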